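/- For every integer 1 ≤ ℓ ≤ n, sup over all functions g : Ω_n → ℝ of the quantity 2 ∫ (η̄(0) − η̄^ℓ(0)) g(η) ν_ρ(dη) − n² D_n(g) is at most (C(ρ)/(n² ℓ)) ∑_{y=0}^{ℓ−1} ∑_{z=0}^{y−1} (1/ξ_z), where C(ρ) = (1−ρ)² + (2/(1+b)) ρ(1−ρ) + (1/(1+2b)) ρ². -/
import Mathlib


open Finset

/-- The configuration obtained from `η` by exchanging the values at `x` and `x+1`. -/
def swapCfg (n : ℕ) (η : ZMod n → Bool) (x : ZMod n) : ZMod n → Bool :=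
  fun y => if y = x then η (x + 1) else if y = x + 1 then η x else η y

/-- Occupation variable as a real number. -/
noncomputable def ind (b : Bool) : ℝ := if b then 1 else 0

/-- The exchange rate `c_{x,x+1}(η) = 1 + b(η(x-1) + η(x+2))`. -/
noncomputable def rate (n : ℕ) (b : ℝ) (η : ZMod n → Bool) (x : ZMod n) : ℝ :=
  1 + b * (ind (η (x - 1)) + ind (η (x + 2)))

/-- The generator `L_n` of the speed change exclusion process with conductances `ξ`. -/
noncomputable def gen (n : ℕ) [NeZero n] (ξ : ZMod n → ℝ) (b : ℝ) (f : (ZMod n → Bool) → ℝ)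
    (η : ZMod n → Bool) : ℝ :=
  ∑ x : ZMod n, ξ x * rate n b η x * (f (swapCfg n η x) - f η)

/-- Integral with respect to the Bernoulli product measure `ν_ρ` on `Ω_n`. -/
noncomputable def intBer (n : ℕ) [NeZero n] (ρ : ℝ) (f : (ZMod n → Bool) → ℝ) : ℝ :=
  ∑ η : ZMod n → Bool, (∏ x : ZMod n, (if η x then ρ else 1 - ρ)) * f η

/-- The Dirichlet form `D_n(g) = -∫ g L_n g dν_ρ`. -/
noncomputable def dirichlet (n : ℕ) [NeZero n] (ξ : ZMod n → ℝ) (b : ℝ) (ρ : ℝ)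
    (g : (ZMod n → Bool) → ℝ) : ℝ :=
  - intBer n ρ (fun η => g η * gen n ξ b g η)

noncomputable def wB (ρ : ℝ) (s : Bool) : ℝ := if s then ρ else 1 - ρ

section aux
variable {n : ℕ} [NeZero n]

noncomputable def Wt (n : ℕ) [NeZero n] (ρ : ℝ) (η : ZMod n → Bool) : ℝ := ∏ x, wB ρ (η x)

lemma intBer_eq (ρ : ℝ) (f : (ZMod n → Bool) → ℝ) :
    intBer n ρ f = ∑ η : ZMod n → Bool, Wt n ρ η * f η := rfl

lemma sum_prod_bool (w : ZMod n → Bool → ℝ) :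
    ∑ η : ZMod n → Bool, ∏ x : ZMod n, w x (η x) = ∏ x : ZMod n, (w x true + w x false) := by
  have := (Fintype.prod_sum w).symm
  simpa [Fintype.sum_bool] using this

lemma Wt_nonneg {ρ : ℝ} (hρ : ρ ∈ Set.Icc (0:ℝ) 1) (η : ZMod n → Bool) : 0 ≤ Wt n ρ η := by
  unfold Wt
  apply Finset.prod_nonneg
  intro x _
  rcases hρ with ⟨h0, h1⟩
  unfold wB; split <;> linarith

lemma swapCfg_comp (η : ZMod n → Bool) (x : ZMod n) :
    swapCfg n η x = η ∘ Equiv.swap x (x + 1) := by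
  funext y
  simp only [swapCfg, Function.comp_apply, Equiv.swap_apply_def]
  split_ifs <;> simp_all

lemma swapCfg_invol (η : ZMod n → Bool) (x : ZMod n) :
    swapCfg n (swapCfg n η x) x = η := by
  rw [swapCfg_comp, swapCfg_comp]
  funext y
  simp [Equiv.swap_apply_self]

lemma Wt_swap (ρ : ℝ) (η : ZMod n → Bool) (x : ZMod n) :
    Wt n ρ (swapCfg n η x) = Wt n ρ η := by
  rw [swapCfg_comp]
  exact Equiv.prod_comp (Equiv.swap x (x+1)) (fun y => wB ρ (η y))

/-- change of variables η ↦ η^{x,x+1} -/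
lemma sum_swap (ρ : ℝ) (F : (ZMod n → Bool) → ℝ) (x : ZMod n) :
    ∑ η : ZMod n → Bool, Wt n ρ η * F (swapCfg n η x) = ∑ η : ZMod n → Bool, Wt n ρ η * F η := by
  have hinv : Function.Involutive (fun η => swapCfg n η x) := fun η => swapCfg_invol η x
  let e : (ZMod n → Bool) ≃ (ZMod n → Bool) := hinv.toPerm
  calc ∑ η : ZMod n → Bool, Wt n ρ η * F (swapCfg n η x)
      = ∑ η : ZMod n → Bool, Wt n ρ (e η) * F (swapCfg n (e η) x) :=
        (Equiv.sum_comp e (fun η => Wt n ρ η * F (swapCfg n η x))).symm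
    _ = ∑ η : ZMod n → Bool, Wt n ρ η * F η := by
        apply Finset.sum_congr rfl
        intro η _
        show Wt n ρ (swapCfg n η x) * F (swapCfg n (swapCfg n η x) x) = _
        rw [Wt_swap, swapCfg_invol]

end aux
section aux2
variable {n : ℕ} [NeZero n]

lemma prod_two_point {a c : ZMod n} (hac : a ≠ c) (p q : ZMod n → ℝ) :
    ∏ x : ZMod n, (if x = a then p x else if x = c then q x else 1) = p a * q c := by
  rw [← Finset.mul_prod_erase Finset.univ _ (Finset.mem_univ a)]
  rw [← Finset.mul_prod_erase _ _ (Finset.mem_erase.mpr ⟨hac.symm, Finset.mem_univ c⟩)]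
  rw [if_pos rfl, if_neg hac.symm, if_pos rfl]
  rw [Finset.prod_eq_one, mul_one]
  intro x hx
  simp only [Finset.mem_erase] at hx
  rw [if_neg hx.2.1, if_neg hx.1]

lemma marginal {a c : ZMod n} (hac : a ≠ c) (ρ : ℝ) (G : Bool → Bool → ℝ) :
    ∑ η : ZMod n → Bool, Wt n ρ η * G (η a) (η c)
      = ∑ u : Bool, ∑ v : Bool, wB ρ u * wB ρ v * G u v := by
  have step1 : ∀ η : ZMod n → Bool, Wt n ρ η * G (η a) (η c)
      = ∑ u : Bool, ∑ v : Bool,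
          (Wt n ρ η * ((if η a = u then (1:ℝ) else 0) * (if η c = v then 1 else 0))) * G u v := by
    intro η
    cases h1 : η a <;> cases h2 : η c <;> simp [Fintype.sum_bool]
  rw [Finset.sum_congr rfl (fun η _ => step1 η)]
  rw [Finset.sum_comm]
  refine Finset.sum_congr rfl (fun u _ => ?_)
  rw [Finset.sum_comm]
  refine Finset.sum_congr rfl (fun v _ => ?_)
  rw [← Finset.sum_mul]
  congr 1
  have key : ∀ η : ZMod n → Bool,
      Wt n ρ η * ((if η a = u then (1:ℝ) else 0) * (if η c = v then 1 else 0))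
      = ∏ x : ZMod n, (if x = a then wB ρ (η x) * (if η x = u then (1:ℝ) else 0)
          else if x = c then wB ρ (η x) * (if η x = v then 1 else 0) else wB ρ (η x)) := by
    intro η
    have h : ∀ x : ZMod n, (if x = a then wB ρ (η x) * (if η x = u then (1:ℝ) else 0)
          else if x = c then wB ρ (η x) * (if η x = v then 1 else 0) else wB ρ (η x))
        = wB ρ (η x) * (if x = a then (if η x = u then (1:ℝ) else 0)
            else if x = c then (if η x = v then 1 else 0) else 1) := by
      intro x; split_ifs <;> simp_all
    rw [Finset.prod_congr rfl (fun x _ => h x), Finset.prod_mul_distrib]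
    rw [prod_two_point hac]
    unfold Wt
    ring
  rw [Finset.sum_congr rfl (fun η _ => key η)]
  refine ((sum_prod_bool (n := n) (fun x s => if x = a then wB ρ s * (if s = u then (1:ℝ) else 0)
          else if x = c then wB ρ s * (if s = v then 1 else 0) else wB ρ s)).trans ?_)
  have h2 : ∀ x : ZMod n, ((fun s => if x = a then wB ρ s * (if s = u then (1:ℝ) else 0)
          else if x = c then wB ρ s * (if s = v then 1 else 0) else wB ρ s) true
        + (fun s => if x = a then wB ρ s * (if s = u then (1:ℝ) else 0)
          else if x = c then wB ρ s * (if s = v then 1 else 0) else wB ρ s) false)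
      = (if x = a then wB ρ u else if x = c then wB ρ v else 1) := by
    intro x
    split_ifs <;> cases u <;> cases v <;> simp [wB] <;> ring
  rw [Finset.prod_congr rfl (fun x _ => h2 x), prod_two_point hac]

end aux2
section aux3
variable {n : ℕ} [NeZero n]

lemma zmod_cast_ne (hn : 4 ≤ n) {k : ℕ} (hk1 : 1 ≤ k) (hk3 : k ≤ 3) : ((k : ℕ) : ZMod n) ≠ 0 := by
  rw [Ne, ZMod.natCast_eq_zero_iff]
  intro h
  have := Nat.le_of_dvd (by omega) h
  omega

lemma rate_pos {b : ℝ} (hb : -(1:ℝ)/2 < b) (η : ZMod n → Bool) (x : ZMod n) :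
    0 < rate n b η x := by
  unfold rate ind
  split_ifs <;> nlinarith

lemma rate_swap (hn : 4 ≤ n) (b : ℝ) (η : ZMod n → Bool) (x : ZMod n) :
    rate n b (swapCfg n η x) x = rate n b η x := by
  have h1 : ((1:ℕ) : ZMod n) ≠ 0 := zmod_cast_ne hn (by norm_num) (by norm_num)
  have h2 : ((2:ℕ) : ZMod n) ≠ 0 := zmod_cast_ne hn (by norm_num) (by norm_num)
  have e1 : x - 1 ≠ x := by
    intro h
    apply h1
    have := sub_eq_self.mp h
    simpa using this
  have e2 : x - 1 ≠ x + 1 := by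
    intro h
    apply h2
    have : x = x + 1 + 1 := by linear_combination h
    push_cast
    linear_combination -this
  have e3 : x + 2 ≠ x := by
    intro h
    apply h2
    have := add_eq_left.mp h
    push_cast
    linear_combination this
  have e4 : x + 2 ≠ x + 1 := by
    intro h
    apply h1
    have : (2:ZMod n) = 1 := by exact add_left_cancel h
    push_cast
    linear_combination h
  unfold rate
  have s1 : swapCfg n η x (x - 1) = η (x - 1) := by
    unfold swapCfg; rw [if_neg e1, if_neg e2]
  have s2 : swapCfg n η x (x + 2) = η (x + 2) := by
    unfold swapCfg; rw [if_neg e3, if_neg e4]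
  rw [s1, s2]

lemma exp_inv_rate (hn : 4 ≤ n) {b : ℝ} (hb : -(1:ℝ)/2 < b) (ρ : ℝ) (z : ZMod n) :
    ∑ η : ZMod n → Bool, Wt n ρ η * (rate n b η z)⁻¹
      = (1 - ρ) ^ 2 + (2 / (1 + b)) * ρ * (1 - ρ) + (1 / (1 + 2 * b)) * ρ ^ 2 := by
  have h3 : ((3:ℕ) : ZMod n) ≠ 0 := zmod_cast_ne hn (by norm_num) (by norm_num)
  have hac : z - 1 ≠ z + 2 := by
    intro h
    apply h3
    push_cast
    linear_combination -h
  have hb1 : (1:ℝ) + b ≠ 0 := by linarith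
  have hb2 : (1:ℝ) + 2 * b ≠ 0 := by linarith
  have hb2' : (1:ℝ) + b * 2 ≠ 0 := by linarith
  have := marginal hac ρ (fun u v => (1 + b * (ind u + ind v))⁻¹)
  rw [show (fun η : ZMod n → Bool => Wt n ρ η * (rate n b η z)⁻¹)
    = fun η => Wt n ρ η * (fun u v => (1 + b * (ind u + ind v))⁻¹) (η (z-1)) (η (z+2)) from rfl]
  rw [this]
  simp only [Fintype.sum_bool, wB, ind, if_true, if_false]
  norm_num
  field_simp
  ring

end aux3
section aux4
variable {n : ℕ} [NeZero n]

lemma bond_sym (hn : 4 ≤ n) (b ρ : ℝ) (g : (ZMod n → Bool) → ℝ) (x : ZMod n) :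
    2 * (∑ η : ZMod n → Bool, Wt n ρ η * (rate n b η x * g η * (g (swapCfg n η x) - g η)))
    = - ∑ η : ZMod n → Bool, Wt n ρ η * (rate n b η x * (g (swapCfg n η x) - g η)^2) := by
  have h := sum_swap (n := n) ρ (fun η => rate n b η x * g η * (g (swapCfg n η x) - g η)) x
  have h2 : ∀ η : ZMod n → Bool, Wt n ρ η * (rate n b (swapCfg n η x) x * g (swapCfg n η x)
        * (g (swapCfg n (swapCfg n η x) x) - g (swapCfg n η x)))
      = Wt n ρ η * (rate n b η x * g (swapCfg n η x) * (g η - g (swapCfg n η x))) := by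
    intro η; rw [rate_swap hn, swapCfg_invol]
  rw [Finset.sum_congr rfl (fun η _ => h2 η)] at h
  rw [two_mul]
  nth_rewrite 1 [← h]
  rw [← Finset.sum_add_distrib, ← Finset.sum_neg_distrib]
  exact Finset.sum_congr rfl (fun η _ => by ring)

lemma dirichlet_eq (hn : 4 ≤ n) (ξ : ZMod n → ℝ) (b ρ : ℝ) (g : (ZMod n → Bool) → ℝ) :
    dirichlet n ξ b ρ g = (1/2) * ∑ x : ZMod n, ξ x *
      ∑ η : ZMod n → Bool, Wt n ρ η * (rate n b η x * (g (swapCfg n η x) - g η)^2) := by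
  unfold dirichlet gen
  rw [intBer_eq]
  have step : ∀ η : ZMod n → Bool,
      Wt n ρ η * (g η * ∑ x : ZMod n, ξ x * rate n b η x * (g (swapCfg n η x) - g η))
      = ∑ x : ZMod n, ξ x * (Wt n ρ η * (rate n b η x * g η * (g (swapCfg n η x) - g η))) := by
    intro η
    rw [Finset.mul_sum, Finset.mul_sum]
    exact Finset.sum_congr rfl (fun x _ => by ring)
  rw [Finset.sum_congr rfl (fun η _ => step η), Finset.sum_comm]
  have step2 : ∀ x : ZMod n,
      ∑ η : ZMod n → Bool, ξ x * (Wt n ρ η * (rate n b η x * g η * (g (swapCfg n η x) - g η)))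
      = ξ x * ∑ η : ZMod n → Bool, Wt n ρ η * (rate n b η x * g η * (g (swapCfg n η x) - g η)) :=
    fun x => (Finset.mul_sum _ _ _).symm
  rw [Finset.sum_congr rfl (fun x _ => step2 x)]
  rw [← Finset.sum_neg_distrib, Finset.mul_sum]
  refine Finset.sum_congr rfl (fun x _ => ?_)
  have hb := bond_sym hn b ρ g x
  have hS : (∑ η : ZMod n → Bool, Wt n ρ η * (rate n b η x * g η * (g (swapCfg n η x) - g η)))
      = -(1/2) * ∑ η : ZMod n → Bool, Wt n ρ η * (rate n b η x * (g (swapCfg n η x) - g η)^2) := by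
    linarith
  rw [hS]
  ring
section aux5
variable {n : ℕ} [NeZero n]

lemma swapCfg_at (η : ZMod n → Bool) (z : ZMod n) : swapCfg n η z z = η (z + 1) := by
  unfold swapCfg; rw [if_pos rfl]

lemma swapCfg_at' (η : ZMod n → Bool) (z : ZMod n) : swapCfg n η z (z + 1) = η z := by
  unfold swapCfg
  rcases eq_or_ne (z + 1) z with h | h
  · rw [if_pos h, h]
  · rw [if_neg h, if_pos rfl]

lemma bond_linear (ρ : ℝ) (g : (ZMod n → Bool) → ℝ) (z : ZMod n) :
    2 * ∑ η : ZMod n → Bool, Wt n ρ η * ((ind (η z) - ind (η (z + 1))) * g η)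
    = ∑ η : ZMod n → Bool,
        Wt n ρ η * ((ind (η z) - ind (η (z + 1))) * (g η - g (swapCfg n η z))) := by
  have h := sum_swap (n := n) ρ (fun η => (ind (η z) - ind (η (z + 1))) * g η) z
  have h2 : ∀ η : ZMod n → Bool,
      Wt n ρ η * ((ind (swapCfg n η z z) - ind (swapCfg n η z (z + 1))) * g (swapCfg n η z))
      = - (Wt n ρ η * ((ind (η z) - ind (η (z + 1))) * g (swapCfg n η z))) := by
    intro η; rw [swapCfg_at, swapCfg_at']; ring
  rw [Finset.sum_congr rfl (fun η _ => h2 η)] at h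
  rw [Finset.sum_neg_distrib] at h
  rw [two_mul]
  nth_rewrite 1 [← h]
  rw [← Finset.sum_neg_distrib, ← Finset.sum_add_distrib]
  refine Finset.sum_congr rfl (fun η _ => by ring)

lemma amgm {γ c δ d : ℝ} (hγ : 0 < γ) (hc : 0 < c) (hδ : δ^2 ≤ 1) :
    δ * d ≤ (1/(2*γ)) * c⁻¹ + (γ/2) * (c * d^2) := by
  have h2 : (0:ℝ) < 2*γ*c := by positivity
  have e1 : (1/(2*γ))*c⁻¹ = 1/(2*γ*c) := by field_simp
  rw [e1, ← sub_le_iff_le_add, le_div_iff₀ h2]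
  nlinarith [sq_nonneg (δ - γ*c*d)]

lemma embed_sum {m : ℕ} (hm : m ≤ n) (h : ZMod n → ℝ) (hh : ∀ x, 0 ≤ h x) :
    ∑ z ∈ Finset.range m, h (z : ZMod n) ≤ ∑ x : ZMod n, h x := by
  have hinj : ∀ z1 ∈ Finset.range m, ∀ z2 ∈ Finset.range m,
      ((z1 : ℕ) : ZMod n) = ((z2 : ℕ) : ZMod n) → z1 = z2 := by
    intro z1 hz1 z2 hz2 hcast
    have h1 : z1 < n := lt_of_lt_of_le (Finset.mem_range.mp hz1) hm
    have h2' : z2 < n := lt_of_lt_of_le (Finset.mem_range.mp hz2) hm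
    have := congrArg ZMod.val hcast
    rwa [ZMod.val_cast_of_lt h1, ZMod.val_cast_of_lt h2'] at this
  rw [← Finset.sum_image hinj]
  exact Finset.sum_le_sum_of_subset_of_nonneg (Finset.subset_univ _) (fun x _ _ => hh x)

end aux5
noncomputable def Tq (n : ℕ) [NeZero n] (b ρ : ℝ) (g : (ZMod n → Bool) → ℝ) (x : ZMod n) : ℝ :=
  ∑ η : ZMod n → Bool, Wt n ρ η * (rate n b η x * (g (swapCfg n η x) - g η)^2)

noncomputable def Lq (n : ℕ) [NeZero n] (ρ : ℝ) (g : (ZMod n → Bool) → ℝ) (z : ZMod n) : ℝ :=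
  ∑ η : ZMod n → Bool, Wt n ρ η * ((ind (η z) - ind (η (z + 1))) * g η)

section aux6
variable {n : ℕ} [NeZero n]

lemma Tq_nonneg {b ρ : ℝ} (hb : -(1:ℝ)/2 < b) (hρ0 : 0 ≤ ρ) (hρ1 : ρ ≤ 1)
    (g : (ZMod n → Bool) → ℝ) (x : ZMod n) : 0 ≤ Tq n b ρ g x :=
  Finset.sum_nonneg fun η _ => mul_nonneg (Wt_nonneg ⟨hρ0, hρ1⟩ η)
    (mul_nonneg (rate_pos hb η x).le (sq_nonneg _))

lemma dirichlet_eq' (hn : 4 ≤ n) (ξ : ZMod n → ℝ) (b ρ : ℝ) (g : (ZMod n → Bool) → ℝ) :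
    dirichlet n ξ b ρ g = (1/2) * ∑ x : ZMod n, ξ x * Tq n b ρ g x := by
  rw [dirichlet_eq hn ξ b ρ g]; rfl

lemma bond_bound (hn : 4 ≤ n) {b : ℝ} (hb : -(1:ℝ)/2 < b) {ρ : ℝ} (hρ0 : 0 ≤ ρ) (hρ1 : ρ ≤ 1)
    (g : (ZMod n → Bool) → ℝ) (z : ZMod n) {γ : ℝ} (hγ : 0 < γ) :
    2 * Lq n ρ g z ≤ (1/(2*γ)) * ((1 - ρ)^2 + (2/(1+b))*ρ*(1-ρ) + (1/(1+2*b))*ρ^2)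
      + (γ/2) * Tq n b ρ g z := by
  unfold Lq
  rw [bond_linear ρ g z]
  have step : ∀ η : ZMod n → Bool,
      Wt n ρ η * ((ind (η z) - ind (η (z+1))) * (g η - g (swapCfg n η z)))
      ≤ (1/(2*γ)) * (Wt n ρ η * (rate n b η z)⁻¹)
        + (γ/2) * (Wt n ρ η * (rate n b η z * (g (swapCfg n η z) - g η)^2)) := by
    intro η
    have hW := Wt_nonneg (n := n) ⟨hρ0, hρ1⟩ η
    have hδ : (ind (η z) - ind (η (z+1)))^2 ≤ 1 := by
      unfold ind; split_ifs <;> norm_num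
    have ham := amgm hγ (rate_pos hb η z) hδ (d := g η - g (swapCfg n η z))
    have hsq : (g η - g (swapCfg n η z))^2 = (g (swapCfg n η z) - g η)^2 := by ring
    rw [hsq] at ham
    calc Wt n ρ η * ((ind (η z) - ind (η (z+1))) * (g η - g (swapCfg n η z)))
        ≤ Wt n ρ η * ((1/(2*γ)) * (rate n b η z)⁻¹
            + (γ/2) * (rate n b η z * (g (swapCfg n η z) - g η)^2)) :=
          mul_le_mul_of_nonneg_left ham hW
      _ = (1/(2*γ)) * (Wt n ρ η * (rate n b η z)⁻¹)
            + (γ/2) * (Wt n ρ η * (rate n b η z * (g (swapCfg n η z) - g η)^2)) := by ring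
  calc ∑ η : ZMod n → Bool, Wt n ρ η * ((ind (η z) - ind (η (z+1))) * (g η - g (swapCfg n η z)))
      ≤ ∑ η : ZMod n → Bool, ((1/(2*γ)) * (Wt n ρ η * (rate n b η z)⁻¹)
          + (γ/2) * (Wt n ρ η * (rate n b η z * (g (swapCfg n η z) - g η)^2))) :=
        Finset.sum_le_sum (fun η _ => step η)
    _ = (1/(2*γ)) * (∑ η : ZMod n → Bool, Wt n ρ η * (rate n b η z)⁻¹)
          + (γ/2) * Tq n b ρ g z := by
        rw [Finset.sum_add_distrib, ← Finset.mul_sum, ← Finset.mul_sum]; rfl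
    _ = (1/(2*γ)) * ((1 - ρ)^2 + (2/(1+b))*ρ*(1-ρ) + (1/(1+2*b))*ρ^2)
          + (γ/2) * Tq n b ρ g z := by
        rw [exp_inv_rate hn hb ρ z]

lemma linear_id {ℓ : ℕ} (hl0 : 0 < (ℓ:ℝ)) (ρ : ℝ) (g : (ZMod n → Bool) → ℝ) :
    intBer n ρ (fun η =>
        ((ind (η 0) - ρ) - (1 / (ℓ:ℝ)) * ∑ y ∈ Finset.range ℓ, (ind (η (y : ZMod n)) - ρ))
          * g η)
      = (1/(ℓ:ℝ)) * ∑ y ∈ Finset.range ℓ, ∑ z ∈ Finset.range y, Lq n ρ g (z : ZMod n) := by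
  rw [intBer_eq]
  have hV : ∀ η : ZMod n → Bool,
      ((ind (η 0) - ρ) - (1 / (ℓ:ℝ)) * ∑ y ∈ Finset.range ℓ, (ind (η (y : ZMod n)) - ρ))
      = (1/(ℓ:ℝ)) * ∑ y ∈ Finset.range ℓ, ∑ z ∈ Finset.range y,
          (ind (η (z : ZMod n)) - ind (η ((z : ZMod n) + 1))) := by
    intro η
    have hcast : ∀ z : ℕ, ((z : ZMod n) + 1) = (((z + 1 : ℕ)) : ZMod n) := by
      intro z; push_cast; ring
    have htel : ∀ y : ℕ,
        ∑ z ∈ Finset.range y, (ind (η (z : ZMod n)) - ind (η ((z : ZMod n) + 1)))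
        = ind (η ((0 : ℕ) : ZMod n)) - ind (η (y : ZMod n)) := by
      intro y
      rw [Finset.sum_congr rfl (fun z _ => by rw [hcast z])]
      exact Finset.sum_range_sub' (fun k => ind (η (k : ZMod n))) y
    rw [Finset.sum_congr rfl (fun y _ => htel y)]
    simp only [Finset.sum_sub_distrib, Finset.sum_const, Finset.card_range, nsmul_eq_mul,
      Nat.cast_zero]
    have hl : (ℓ:ℝ) ≠ 0 := ne_of_gt hl0
    field_simp
    ring
  rw [Finset.sum_congr rfl (fun η _ => by rw [hV η])]
  have push : ∀ η : ZMod n → Bool,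
      Wt n ρ η * (((1/(ℓ:ℝ)) * ∑ y ∈ Finset.range ℓ, ∑ z ∈ Finset.range y,
          (ind (η (z : ZMod n)) - ind (η ((z : ZMod n) + 1)))) * g η)
      = (1/(ℓ:ℝ)) * ∑ y ∈ Finset.range ℓ, ∑ z ∈ Finset.range y,
          Wt n ρ η * ((ind (η (z : ZMod n)) - ind (η ((z : ZMod n) + 1))) * g η) := by
    intro η
    rw [show Wt n ρ η * (((1/(ℓ:ℝ)) * ∑ y ∈ Finset.range ℓ, ∑ z ∈ Finset.range y,
          (ind (η (z : ZMod n)) - ind (η ((z : ZMod n) + 1)))) * g η)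
        = (1/(ℓ:ℝ)) * ((∑ y ∈ Finset.range ℓ, ∑ z ∈ Finset.range y,
          (ind (η (z : ZMod n)) - ind (η ((z : ZMod n) + 1)))) * (Wt n ρ η * g η)) from by ring]
    congr 1
    rw [Finset.sum_mul]
    refine Finset.sum_congr rfl (fun y _ => ?_)
    rw [Finset.sum_mul]
    exact Finset.sum_congr rfl (fun z _ => by ring)
  rw [Finset.sum_congr rfl (fun η _ => push η)]
  rw [← Finset.mul_sum]
  congr 1
  rw [Finset.sum_comm]
  refine Finset.sum_congr rfl (fun y _ => ?_)
  rw [Finset.sum_comm]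
  exact Finset.sum_congr rfl (fun z _ => rfl)

end aux6
/-- the variational bound: for every `g`,
`2∫(η̄(0) − η̄^ℓ(0)) g dν_ρ − n² D_n(g) ≤ (C(ρ)/(n²ℓ)) ∑_y ∑_z 1/ξ_z`,
i.e. the supremum over `g` of the left-hand side is bounded by the right-hand side. -/
theorem variational_bound (n : ℕ) [NeZero n] (hn : 4 ≤ n) (b : ℝ) (hb : -(1:ℝ)/2 < b)
    (ξ : ZMod n → ℝ) (hξ : ∀ x, 0 < ξ x) (ρ : ℝ) (hρ : ρ ∈ Set.Icc (0:ℝ) 1)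
    (ℓ : ℕ) (hℓ : 1 ≤ ℓ) (hℓn : ℓ ≤ n) (g : (ZMod n → Bool) → ℝ) :
    2 * intBer n ρ (fun η =>
        ((ind (η 0) - ρ) - (1 / (ℓ:ℝ)) * ∑ y ∈ Finset.range ℓ, (ind (η (y : ZMod n)) - ρ))
          * g η)
      - (n:ℝ) ^ 2 * dirichlet n ξ b ρ g ≤
      (((1 - ρ) ^ 2 + (2 / (1 + b)) * ρ * (1 - ρ) + (1 / (1 + 2 * b)) * ρ ^ 2)
          / ((n:ℝ) ^ 2 * (ℓ:ℝ))) *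
        ∑ y ∈ Finset.range ℓ, ∑ z ∈ Finset.range y, 1 / ξ (z : ZMod n) := by
  obtain ⟨hρ0, hρ1⟩ := hρ
  have hb1 : (0:ℝ) < 1 + b := by linarith
  have hb2 : (0:ℝ) < 1 + 2 * b := by linarith
  have hnn : 0 < n := by omega
  have hn0 : (0:ℝ) < (n:ℝ) := by exact_mod_cast hnn
  have hl0 : (0:ℝ) < (ℓ:ℝ) := by exact_mod_cast hℓ
  set C : ℝ := (1 - ρ) ^ 2 + (2 / (1 + b)) * ρ * (1 - ρ) + (1 / (1 + 2 * b)) * ρ ^ 2 with hCdef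
  have hC : 0 ≤ C := by
    have t1 := sq_nonneg (1 - ρ)
    have t2 : 0 ≤ (2 / (1 + b)) * ρ * (1 - ρ) :=
      mul_nonneg (mul_nonneg (div_nonneg (by norm_num) hb1.le) hρ0) (by linarith)
    have t3 : 0 ≤ (1 / (1 + 2 * b)) * ρ ^ 2 :=
      mul_nonneg (div_nonneg (by norm_num) hb2.le) (sq_nonneg ρ)
    rw [hCdef]; linarith
  rw [linear_id hl0 ρ g, dirichlet_eq' hn ξ b ρ g]
  -- main inequalities
  have key1 : ∀ y ∈ Finset.range ℓ, ∀ z ∈ Finset.range y,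
      2 * Lq n ρ g (z : ZMod n)
      ≤ (1/(2*((n:ℝ)^2 * ξ (z : ZMod n)))) * C
        + (((n:ℝ)^2 * ξ (z : ZMod n))/2) * Tq n b ρ g (z : ZMod n) := by
    intro y _ z _
    have hγ : 0 < (n:ℝ)^2 * ξ (z : ZMod n) := mul_pos (by positivity) (hξ _)
    exact bond_bound hn hb hρ0 hρ1 g _ hγ
  have main1 : (1/(ℓ:ℝ)) * ∑ y ∈ Finset.range ℓ, ∑ z ∈ Finset.range y, (2 * Lq n ρ g (z : ZMod n))
      ≤ (1/(ℓ:ℝ)) * ∑ y ∈ Finset.range ℓ, ∑ z ∈ Finset.range y,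
            ((1/(2*((n:ℝ)^2 * ξ (z : ZMod n)))) * C)
        + (1/(ℓ:ℝ)) * ∑ y ∈ Finset.range ℓ, ∑ z ∈ Finset.range y,
            ((((n:ℝ)^2 * ξ (z : ZMod n))/2) * Tq n b ρ g (z : ZMod n)) := by
    rw [← mul_add, ← Finset.sum_add_distrib]
    apply mul_le_mul_of_nonneg_left _ (by positivity)
    rw [Finset.sum_congr rfl (fun y _ => (Finset.sum_add_distrib).symm)]
    exact Finset.sum_le_sum (fun y hy => Finset.sum_le_sum (fun z hz => key1 y hy z hz))
  have main2 : (1/(ℓ:ℝ)) * ∑ y ∈ Finset.range ℓ, ∑ z ∈ Finset.range y,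
        ((((n:ℝ)^2 * ξ (z : ZMod n))/2) * Tq n b ρ g (z : ZMod n))
      ≤ (n:ℝ)^2 * ((1/2) * ∑ x : ZMod n, ξ x * Tq n b ρ g x) := by
    have inner : ∀ y ∈ Finset.range ℓ,
        ∑ z ∈ Finset.range y, ((((n:ℝ)^2 * ξ (z : ZMod n))/2) * Tq n b ρ g (z : ZMod n))
        ≤ ∑ x : ZMod n, (((n:ℝ)^2 * ξ x)/2) * Tq n b ρ g x := by
      intro y hy
      exact embed_sum (le_trans (Finset.mem_range.mp hy).le hℓn)
        (fun x => (((n:ℝ)^2 * ξ x)/2) * Tq n b ρ g x)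
        (fun x => mul_nonneg (div_nonneg (mul_pos (by positivity) (hξ x)).le (by norm_num))
          (Tq_nonneg hb hρ0 hρ1 g x))
    calc (1/(ℓ:ℝ)) * ∑ y ∈ Finset.range ℓ, ∑ z ∈ Finset.range y,
          ((((n:ℝ)^2 * ξ (z : ZMod n))/2) * Tq n b ρ g (z : ZMod n))
        ≤ (1/(ℓ:ℝ)) * ∑ y ∈ Finset.range ℓ,
            (∑ x : ZMod n, (((n:ℝ)^2 * ξ x)/2) * Tq n b ρ g x) :=
          mul_le_mul_of_nonneg_left (Finset.sum_le_sum inner) (by positivity)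
      _ = ∑ x : ZMod n, (((n:ℝ)^2 * ξ x)/2) * Tq n b ρ g x := by
          rw [Finset.sum_const, Finset.card_range, nsmul_eq_mul]
          field_simp
      _ = (n:ℝ)^2 * ((1/2) * ∑ x : ZMod n, ξ x * Tq n b ρ g x) := by
          rw [Finset.mul_sum, Finset.mul_sum]
          exact Finset.sum_congr rfl (fun x _ => by ring)
  have main3 : (1/(ℓ:ℝ)) * ∑ y ∈ Finset.range ℓ, ∑ z ∈ Finset.range y,
        ((1/(2*((n:ℝ)^2 * ξ (z : ZMod n)))) * C)
      ≤ (C/((n:ℝ)^2*(ℓ:ℝ))) * ∑ y ∈ Finset.range ℓ, ∑ z ∈ Finset.range y, 1/ξ (z : ZMod n) := by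
    rw [Finset.mul_sum, Finset.mul_sum]
    apply Finset.sum_le_sum
    intro y _
    rw [Finset.mul_sum, Finset.mul_sum]
    apply Finset.sum_le_sum
    intro z _
    have hstep : ∀ K X : ℝ, 0 ≤ K → 0 < X →
        (1/(ℓ:ℝ))*((1/(2*((n:ℝ)^2 * X))) * K) ≤ (K/((n:ℝ)^2*(ℓ:ℝ)))*(1/X) := by
      intro K X hK hX
      have e1 : (1/(ℓ:ℝ))*((1/(2*((n:ℝ)^2 * X))) * K) = K/(2*((n:ℝ)^2*(ℓ:ℝ)*X)) := by
        field_simp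
      have e2 : (K/((n:ℝ)^2*(ℓ:ℝ)))*(1/X) = K/((n:ℝ)^2*(ℓ:ℝ)*X) := by rw [div_mul_div_comm, mul_one]
      rw [e1, e2]
      have hpos : (0:ℝ) < (n:ℝ)^2*(ℓ:ℝ)*X := by positivity
      rw [div_le_div_iff₀ (by linarith) hpos]
      nlinarith [mul_nonneg hK hpos.le]
    exact hstep C (ξ (z : ZMod n)) hC (hξ _)
  have e0 : ∑ y ∈ Finset.range ℓ, ∑ z ∈ Finset.range y, (2 * Lq n ρ g (z : ZMod n))
      = 2 * ∑ y ∈ Finset.range ℓ, ∑ z ∈ Finset.range y, Lq n ρ g (z : ZMod n) := by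
    rw [Finset.mul_sum]
    exact Finset.sum_congr rfl (fun y _ => (Finset.mul_sum _ _ _).symm)
  have goal' : 2 * ((1/(ℓ:ℝ)) * ∑ y ∈ Finset.range ℓ, ∑ z ∈ Finset.range y, Lq n ρ g (z : ZMod n))
      = (1/(ℓ:ℝ)) * ∑ y ∈ Finset.range ℓ, ∑ z ∈ Finset.range y, (2 * Lq n ρ g (z : ZMod n)) := by
    rw [e0]; ring
  rw [show (1:ℝ) / (ℓ:ℝ) = 1/(ℓ:ℝ) from rfl] at *
  linarith [main1, main2, main3, goal']
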